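/- Let φ : ℝ → ℝ be a C^∞ function and let U ⊆ ℝ³ be an open set of points (x, θ, t) on which φ(2x) < 1. Define z₂(x, θ, t) = exp(x + iθ), z₁(x, θ, t) = exp(2ix)·(exp(it)·(1 − φ(2x)) − 1), and γ(x, t) = 2·(exp(−it) − 1 + φ(2x) − i·φ′(2x)) / (1 − φ(2x)). Then on U the first-order operator L̄ = ∂_x + i·∂_θ + γ(x, t)·∂_t annihilates both z₁ and z₂; that is, ∂_x z_j + i·∂_θ z_j + γ·∂_t z_j = 0 on U for j = 1, 2. -/

import Mathlib

open Set

/-- `z₂(x,θ,t) = e^{x+iθ}`. -/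
noncomputable def z₂ (x θ _t : ℝ) : ℂ := Complex.exp (x + θ * Complex.I)

/-- `z₁(x,θ,t) = e^{2ix}(e^{it}(1-φ(2x)) - 1)`. -/
noncomputable def z₁ (φ : ℝ → ℝ) (x _θ t : ℝ) : ℂ :=
  Complex.exp (2 * x * Complex.I) *
    (Complex.exp (t * Complex.I) * (1 - (φ (2 * x) : ℂ)) - 1)

/-- `γ(x,t) = 2(e^{-it} - 1 + φ(2x) - iφ′(2x)) / (1 - φ(2x))`. -/
noncomputable def γcoef (φ : ℝ → ℝ) (x t : ℝ) : ℂ :=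
  2 * (Complex.exp (-t * Complex.I) - 1 + (φ (2 * x) : ℂ)
        - Complex.I * Complex.ofReal (deriv φ (2 * x))) / (1 - (φ (2 * x) : ℂ))

/-- The vector field `L̄ = ∂ₓ + i∂_θ + γ(x,t)∂ₜ` annihilates `z₁` and `z₂` on any open
set where `φ(2x) < 1`. -/
theorem Lbar_annihilates (φ : ℝ → ℝ) (hφ : ContDiff ℝ (⊤ : ℕ∞) φ)
    (U : Set (ℝ × ℝ × ℝ)) (hU : IsOpen U) (hU1 : ∀ p ∈ U, φ (2 * p.1) < 1) :
    ∀ x θ t : ℝ, (x, θ, t) ∈ U →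
      (deriv (fun x' => z₁ φ x' θ t) x
        + Complex.I * deriv (fun θ' => z₁ φ x θ' t) θ
        + γcoef φ x t * deriv (fun t' => z₁ φ x θ t') t = 0) ∧
      (deriv (fun x' => z₂ x' θ t) x
        + Complex.I * deriv (fun θ' => z₂ x θ' t) θ
        + γcoef φ x t * deriv (fun t' => z₂ x θ t') t = 0) := by
  intro x θ t hmem
  have hφ1 : φ (2 * x) < 1 := hU1 _ hmem
  have hne : (1 : ℂ) - (φ (2 * x) : ℂ) ≠ 0 := by
    intro h
    have h1 : (φ (2 * x) : ℂ) = 1 := by linear_combination -h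
    have : φ (2 * x) = 1 := by exact_mod_cast h1
    linarith
  -- derivative building blocks
  have hd2x : HasDerivAt (fun x' : ℝ => (2 : ℂ) * (x' : ℂ) * Complex.I)
      (2 * Complex.I) x := by
    simpa using ((Complex.ofRealCLM.hasDerivAt (x := x)).const_mul (2:ℂ)).mul_const Complex.I
  have hexp2x : HasDerivAt (fun x' : ℝ => Complex.exp (2 * x' * Complex.I))
      (Complex.exp (2 * x * Complex.I) * (2 * Complex.I)) x := hd2x.cexp
  have hφd : HasDerivAt (fun x' : ℝ => φ (2 * x')) (deriv φ (2 * x) * 2) x := by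
    have h1 : HasDerivAt (fun x' : ℝ => 2 * x') 2 x := by
      simpa using (hasDerivAt_id x).const_mul (2:ℝ)
    exact ((hφ.differentiable (by simp)).differentiableAt.hasDerivAt).comp x h1
  have hφdc : HasDerivAt (fun x' : ℝ => ((φ (2 * x') : ℂ)))
      ((deriv φ (2 * x) * 2 : ℝ) : ℂ) x := hφd.ofReal_comp
  have hinner : HasDerivAt
      (fun x' : ℝ => Complex.exp (t * Complex.I) * (1 - (φ (2 * x') : ℂ)) - 1)
      (Complex.exp (t * Complex.I) * (0 - ((deriv φ (2 * x) * 2 : ℝ) : ℂ))) x := by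
    exact (((hasDerivAt_const x (1:ℂ)).sub hφdc).const_mul _).sub_const 1
  have hz1x : deriv (fun x' => z₁ φ x' θ t) x
      = Complex.exp (2 * x * Complex.I) * (2 * Complex.I) *
          (Complex.exp (t * Complex.I) * (1 - (φ (2 * x) : ℂ)) - 1)
        + Complex.exp (2 * x * Complex.I) *
          (Complex.exp (t * Complex.I) * (0 - ((deriv φ (2 * x) * 2 : ℝ) : ℂ))) := by
    exact (hexp2x.mul hinner).deriv
  have hz1θ : deriv (fun θ' => z₁ φ x θ' t) θ = 0 := by
    simp [z₁]
  have hz1t : deriv (fun t' => z₁ φ x θ t') t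
      = Complex.exp (2 * x * Complex.I) *
          (Complex.exp (t * Complex.I) * Complex.I * (1 - (φ (2 * x) : ℂ))) := by
    have hdt : HasDerivAt (fun t' : ℝ => (t' : ℂ) * Complex.I) Complex.I t := by
      simpa using (Complex.ofRealCLM.hasDerivAt (x := t)).mul_const Complex.I
    have : HasDerivAt (fun t' : ℝ =>
        Complex.exp (2 * x * Complex.I) *
          (Complex.exp (t' * Complex.I) * (1 - (φ (2 * x) : ℂ)) - 1))
        (Complex.exp (2 * x * Complex.I) *
          (Complex.exp (t * Complex.I) * Complex.I * (1 - (φ (2 * x) : ℂ)))) t := by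
      have := ((hdt.cexp.mul_const (1 - (φ (2 * x) : ℂ))).sub_const 1).const_mul
        (Complex.exp (2 * x * Complex.I))
      simpa [mul_comm, mul_assoc, mul_left_comm] using this
    exact this.deriv
  have hz2x : deriv (fun x' => z₂ x' θ t) x = Complex.exp (x + θ * Complex.I) := by
    have : HasDerivAt (fun x' : ℝ => Complex.exp ((x' : ℂ) + θ * Complex.I))
        (Complex.exp ((x : ℂ) + θ * Complex.I) * 1) x :=
      ((Complex.ofRealCLM.hasDerivAt (x := x)).add_const _).cexp
    simpa [z₂] using this.deriv
  have hz2θ : deriv (fun θ' => z₂ x θ' t) θ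
      = Complex.exp (x + θ * Complex.I) * Complex.I := by
    have : HasDerivAt (fun θ' : ℝ => Complex.exp ((x : ℂ) + (θ' : ℂ) * Complex.I))
        (Complex.exp ((x : ℂ) + (θ : ℂ) * Complex.I) * (1 * Complex.I)) θ :=
      (((Complex.ofRealCLM.hasDerivAt (x := θ)).mul_const Complex.I).const_add _).cexp
    simpa [z₂] using this.deriv
  have hz2t : deriv (fun t' => z₂ x θ t') t = 0 := by simp [z₂]
  have hexpne : Complex.exp (t * Complex.I) ≠ 0 := Complex.exp_ne_zero _
  have hexpneg : Complex.exp (-t * Complex.I) = (Complex.exp (t * Complex.I))⁻¹ := by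
    rw [← Complex.exp_neg]; ring_nf
  refine ⟨?_, ?_⟩
  · rw [hz1x, hz1θ, hz1t, γcoef, hexpneg]
    field_simp
    ring_nf
    simp only [Complex.I_sq]
    push_cast; ring
  · rw [hz2x, hz2θ, hz2t]
    ring_nf
    simp only [Complex.I_sq]
    ring
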